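/- Let σ be a sequence of channel actions over Σ and set y_k = pr[σ^k](ε) for k ∈ ℕ. Then: (a) y_k ⊑ y_{k+1} for all k; (b) if y_K = y_{K+1} for some K, then y_k = y_K for all k ≥ K, so the set I_σ = {x : y_k ⊑ x for all k} equals the upward closure of y_K; (c) if y_K ≠ y_{K+1} for every K, then I_σ is empty, i.e., for every word x there exists k with ¬(y_k ⊑ x). In particular I_σ is upward-closed and is either empty or has a single minimal element. -/

import Mathlib

/-!
Residuals are monotone for the subword order in their first argument, hence so is `pr σ`.
Since `y (k + 1) = pr σ (y k)` and `y 0 = ε`, the words `y k` form an ascending chain of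
iterates of a monotone map. A repetition is a fixed point, after which the chain is constant;
without repetition the lengths grow strictly, so every word `x` is eventually too short to
contain `y k`.
-/

open List
/-- `wpow u k` is the word `u` concatenated `k` times. -/
def wpow {β : Type*} (u : List β) (k : ℕ) : List β := (List.replicate k u).flatten

/-- Auxiliary residual operation, working on reversed words. -/
def resAux {α : Type*} [DecidableEq α] : List α → List α → List α
  | xr, [] => xr
  | [], _ :: _ => []
  | a :: xr, b :: vr => if a = b then resAux xr vr else resAux (a :: xr) vr
termination_by xr vr => vr.length

/-- The residual `x / v`: the prefix of `x` obtained by removing from `x`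
its longest suffix that is a subword of `v`. -/
def res {α : Type*} [DecidableEq α] (x v : List α) : List α :=
  (resAux x.reverse v.reverse).reverse

inductive Act (α : Type*) where
  | write : List α → Act α
  | read : List α → Act α

/-- written part -/
def wri {α : Type*} : List (Act α) → List α
  | [] => []
  | Act.write w :: σ => w ++ wri σ
  | Act.read _ :: σ => wri σ

/-- read part -/
def rea {α : Type*} : List (Act α) → List α
  | [] => []
  | Act.write _ :: σ => rea σ
  | Act.read w :: σ => w ++ rea σ

/-- `pr σ x` : minimal `σ`-predecessor of `x` (processing `σ` right-to-left). -/
def pr {α : Type*} [DecidableEq α] : List (Act α) → List α → List α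
  | [], x => x
  | Act.write v :: σ, x => res (pr σ x) v
  | Act.read u :: σ, x => u ++ pr σ x

/-- lossy step for a single channel action -/
def stepAct {α : Type*} : Act α → List α → List α → Prop
  | Act.write w, x, y => y <+ x ++ w
  | Act.read w, x, y => w ++ y <+ x

/-- lossy steps along a sequence of channel actions -/
def steps {α : Type*} : List (Act α) → List α → List α → Prop
  | [], x, y => x = y
  | θ :: σ, x, y => ∃ z, stepAct θ x z ∧ steps σ z y

/-- `w` is a fractional power of `u` -/
def FracPow {α : Type*} (u w : List α) : Prop := ∃ k : ℕ, w <+: wpow u k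

/-- `x ⊖ u` : remainder of `x` after reading the leftmost embedding of `u`. -/
def ominus {α : Type*} [DecidableEq α] : List α → List α → List α
  | x, [] => x
  | [], _ :: _ => []
  | a :: x, b :: u => if a = b then ominus x u else ominus x (b :: u)

/-- `σ` is increasing -/
def Increasing {α : Type*} (σ : List (Act α)) : Prop :=
  0 < (wri σ).length ∧
    wpow (rea σ) (wri σ).length <+ wpow (wri σ) ((wri σ).length - 1)

section Residual

variable {α : Type*} [DecidableEq α]

lemma resAux_mono (vr : List α) {xr yr : List α} (h : xr <+ yr) :
    resAux xr vr <+ resAux yr vr := by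
  induction vr generalizing xr yr with
  | nil => simpa [resAux] using h
  | cons b vr ih =>
    have erase_head : ∀ zr, resAux zr (b :: vr) <+ resAux zr vr := by
      rintro (_ | ⟨a, zr⟩)
      · simp [resAux]
      · by_cases hab : a = b
        · simpa only [resAux, if_pos hab] using ih (zr.sublist_cons_self a)
        · simp only [resAux, if_neg hab, Sublist.refl]
    induction h with
    | slnil => exact Sublist.refl _
    | cons c h _ =>
      by_cases hc : c = b
      · simpa only [resAux, if_pos hc] using (erase_head _).trans (ih h)
      · simpa only [resAux, if_neg hc] using (erase_head _).trans (ih (h.cons c))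
    | cons_cons c h _ =>
      by_cases hc : c = b
      · simpa only [resAux, if_pos hc] using ih h
      · simpa only [resAux, if_neg hc] using ih (h.cons_cons c)

lemma res_mono (v : List α) {x y : List α} (h : x <+ y) : res x v <+ res y v :=
  (resAux_mono v.reverse h.reverse).reverse

lemma pr_mono (σ : List (Act α)) {x y : List α} (h : x <+ y) : pr σ x <+ pr σ y := by
  induction σ with
  | nil => exact h
  | cons θ σ ih =>
    cases θ with
    | write v => exact res_mono v ih
    | read u => exact ih.append_left u

lemma pr_append (σ₁ σ₂ : List (Act α)) (x : List α) :
    pr (σ₁ ++ σ₂) x = pr σ₁ (pr σ₂ x) := by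
  induction σ₁ with
  | nil => rfl
  | cons θ σ ih => cases θ <;> simp [pr, ih]

lemma wpow_succ {β : Type*} (u : List β) (k : ℕ) : wpow u (k + 1) = u ++ wpow u k := by
  simp [wpow, replicate_succ]

lemma pr_wpow (σ : List (Act α)) (k : ℕ) (x : List α) : pr (wpow σ k) x = (pr σ)^[k] x := by
  induction k with
  | zero => rfl
  | succ k ih => rw [wpow_succ, pr_append, ih, Function.iterate_succ_apply']

end Residual

section Iterate

variable {α : Type*} {f : List α → List α} {x : List α}

lemma iterate_sublist_iterate_succ (hf : ∀ ⦃y z⦄, y <+ z → f y <+ f z) (hx : x <+ f x) :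
    ∀ k, f^[k] x <+ f^[k + 1] x
  | 0 => hx
  | k + 1 => by
    simpa only [Function.iterate_succ_apply'] using hf (iterate_sublist_iterate_succ hf hx k)

lemma iterate_sublist_iterate_of_le (hf : ∀ ⦃y z⦄, y <+ z → f y <+ f z) (hx : x <+ f x)
    {i j : ℕ} (hij : i ≤ j) : f^[i] x <+ f^[j] x := by
  induction j, hij using Nat.le_induction with
  | base => exact Sublist.refl _
  | succ j _ ih => exact ih.trans (iterate_sublist_iterate_succ hf hx j)

lemma iterate_eq_of_iterate_succ_eq {K k : ℕ} (hK : f^[K] x = f^[K + 1] x) (hk : K ≤ k) :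
    f^[k] x = f^[K] x := by
  have hfix : Function.IsFixedPt f (f^[K] x) := by
    rw [Function.IsFixedPt, ← Function.iterate_succ_apply' f K, hK]
  obtain ⟨n, rfl⟩ := Nat.exists_eq_add_of_le hk
  rw [add_comm, Function.iterate_add_apply, (hfix.iterate n).eq]

lemma forall_iterate_sublist_iff (hf : ∀ ⦃y z⦄, y <+ z → f y <+ f z) (hx : x <+ f x)
    {K : ℕ} (hK : f^[K] x = f^[K + 1] x) (w : List α) :
    (∀ k, f^[k] x <+ w) ↔ f^[K] x <+ w := by
  refine ⟨fun h => h K, fun h k => ?_⟩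
  rcases le_total k K with hk | hk
  · exact (iterate_sublist_iterate_of_le hf hx hk).trans h
  · rwa [iterate_eq_of_iterate_succ_eq hK hk]

lemma le_length_iterate (hf : ∀ ⦃y z⦄, y <+ z → f y <+ f z) (hx : x <+ f x)
    (hne : ∀ K, f^[K] x ≠ f^[K + 1] x) : ∀ k, k ≤ (f^[k] x).length
  | 0 => Nat.zero_le _
  | k + 1 => by
    have hsub := iterate_sublist_iterate_succ hf hx k
    have hlt : (f^[k] x).length < (f^[k + 1] x).length :=
      hsub.length_le.lt_of_ne fun hlen => hne k (hsub.eq_of_length hlen)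
    have := le_length_iterate hf hx hne k
    omega

lemma exists_not_iterate_sublist (hf : ∀ ⦃y z⦄, y <+ z → f y <+ f z) (hx : x <+ f x)
    (hne : ∀ K, f^[K] x ≠ f^[K + 1] x) (w : List α) : ∃ k, ¬ f^[k] x <+ w := by
  refine ⟨w.length + 1, fun hsub => ?_⟩
  have := hsub.length_le
  have := le_length_iterate hf hx hne (w.length + 1)
  omega

end Iterate

/-- the sequence `y_k = pr[σ^k](ε)` is increasing for `⊑`; if it
stabilises at `K` then it is constant from `K` on and `I_σ` is the upward closure
of `y_K`; otherwise `I_σ` is empty. -/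
theorem Isigma_characterisation {α : Type*} [DecidableEq α]
    (σ : List (Act α)) :
    (∀ k : ℕ, pr (wpow σ k) ([] : List α) <+ pr (wpow σ (k + 1)) []) ∧
    (∀ K : ℕ, pr (wpow σ K) ([] : List α) = pr (wpow σ (K + 1)) [] →
      (∀ k : ℕ, K ≤ k → pr (wpow σ k) ([] : List α) = pr (wpow σ K) []) ∧
      {x : List α | ∀ k : ℕ, pr (wpow σ k) [] <+ x} =
        {x : List α | pr (wpow σ K) [] <+ x}) ∧
    ((∀ K : ℕ, pr (wpow σ K) ([] : List α) ≠ pr (wpow σ (K + 1)) []) →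
      ∀ x : List α, ∃ k : ℕ, ¬ pr (wpow σ k) [] <+ x) := by
  have hf : ∀ ⦃y z : List α⦄, y <+ z → pr σ y <+ pr σ z := fun _ _ => pr_mono σ
  have h₀ : ([] : List α) <+ pr σ [] := nil_sublist _
  simp only [pr_wpow]
  refine ⟨iterate_sublist_iterate_succ hf h₀, fun K hK => ⟨?_, ?_⟩, ?_⟩
  · exact fun k => iterate_eq_of_iterate_succ_eq hK
  · exact Set.ext fun w => forall_iterate_sublist_iff hf h₀ hK w
  · exact exists_not_iterate_sublist hf h₀
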